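/- arXiv:1507.08418 — 2 statements merged into one kernel-verified Lean document; each statement's English description precedes it below -/
import Mathlib

section
/- Let A and B be symmetric linear operators in a real or complex Hilbert space H such that A is essentially selfadjoint, B is A-bounded, and ⟨A x, B y⟩ = ⟨B x, A y⟩ for all x, y ∈ dom A. Then A + B (with domain dom A) and the restriction of B to dom A are both essentially selfadjoint. -/
open LinearPMap

/-- A partially defined operator `A` in a Hilbert space is symmetric if
`⟪A x, y⟫ = ⟪x, A y⟫` for all `x, y` in its domain. -/
def LinearPMap.IsSymmetricOp {𝕜 H : Type*} [RCLike 𝕜] [NormedAddCommGroup H]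
    [InnerProductSpace 𝕜 H] (A : H →ₗ.[𝕜] H) : Prop :=
  ∀ x y : A.domain, inner (𝕜 := 𝕜) (A x) (y : H) = inner (𝕜 := 𝕜) (x : H) (A y)

/-- A partially defined operator `A` in a Hilbert space is selfadjoint if it is densely
defined and `A* = A`. -/
def LinearPMap.IsSelfAdjointOp {𝕜 H : Type*} [RCLike 𝕜] [NormedAddCommGroup H]
    [InnerProductSpace 𝕜 H] [CompleteSpace H] (A : H →ₗ.[𝕜] H) : Prop :=
  Dense (A.domain : Set H) ∧ A.adjoint = A

/-- An operator `A` in a Hilbert space is essentially selfadjoint if it is closable and its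
closure is a densely defined selfadjoint operator. -/
def LinearPMap.IsEssSelfAdjointOp {𝕜 H : Type*} [RCLike 𝕜] [NormedAddCommGroup H]
    [InnerProductSpace 𝕜 H] [CompleteSpace H] (A : H →ₗ.[𝕜] H) : Prop :=
  A.IsClosable ∧ Dense (A.closure.domain : Set H) ∧ A.closure.adjoint = A.closure


/-!
Let `Ā` be the closure of `A` and `Rₜ = (1 + t² Ā²)⁻¹`, obtained from the orthogonal projection
onto the graph of `t Ā` in `H ⊕₂ H`. Each `Rₜ` is a symmetric contraction with range in
`dom Ā²`, and `Rₜ → 1` strongly as `t → 0`.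

By `A`-boundedness every point `(x, Ā x)` of the graph of `Ā` extends to a limit `(x, Ā x, c)`
of triples `(xₙ, A xₙ, B xₙ)`, so `dom Ā ⊆ dom C` for the closure `C` of `B` restricted to
`dom A`, and the relation `⟪A x, B y⟫ = ⟪B x, A y⟫` passes to `Ā` and `C`. Writing `x = Rₜ x + t² Ā² Rₜ x`, this
relation shows that `Rₜ` maps the graph of `C` into itself. Consequently, for `T = A + B` and for
`T = B|dom A`, `Rₜ` maps the graph of `T` into the graph of its closure `T̄`. If `v = T̄* u`,
testing against `dom T` gives `T̄ (Rₜ u) = Rₜ v`; letting `t → 0` and using that `T̄` is closed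
gives `(u, v) ∈ graph T̄`, i.e. `T̄* ≤ T̄`.
-/

open Filter Topology
open scoped InnerProductSpace

theorem Set.eqOn_closure₂ {X Y : Type*} [TopologicalSpace X] [TopologicalSpace Y] [T2Space Y]
    {s : Set X} {f g : X → X → Y} (hf : Continuous (Function.uncurry f))
    (hg : Continuous (Function.uncurry g)) (h : ∀ x ∈ s, ∀ y ∈ s, f x y = g x y) :
    ∀ x ∈ closure s, ∀ y ∈ closure s, f x y = g x y := by
  have key := Set.EqOn.closure (s := s ×ˢ s) (fun p hp => h _ hp.1 _ hp.2) hf hg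
  intro x hx y hy
  exact key (by rw [closure_prod_eq]; exact ⟨hx, hy⟩ : (x, y) ∈ closure (s ×ˢ s))

theorem CauchySeq.of_dist_le_add {X Y Z : Type*} [PseudoMetricSpace X] [PseudoMetricSpace Y]
    [PseudoMetricSpace Z] {f : ℕ → X} {g : ℕ → Y} {h : ℕ → Z} (hf : CauchySeq f)
    (hg : CauchySeq g) (a b : ℝ)
    (hh : ∀ m n, dist (h m) (h n) ≤ a * dist (f m) (f n) + b * dist (g m) (g n)) :
    CauchySeq h := by
  rw [cauchySeq_iff_tendsto_dist_atTop_0] at hf hg ⊢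
  refine squeeze_zero (fun _ => dist_nonneg) (fun n => hh n.1 n.2) ?_
  simpa using (hf.const_mul a).add (hg.const_mul b)

theorem Real.le_sqrt_mul_add_sqrt_mul {a b c α β : ℝ} (ha : 0 ≤ a) (hb : 0 ≤ b) (hc : 0 ≤ c)
    (hα : 0 ≤ α) (hβ : 0 ≤ β) (h : c ^ 2 ≤ α * a ^ 2 + β * b ^ 2) :
    c ≤ √α * a + √β * b := by
  have hα' := Real.sq_sqrt hα
  have hβ' := Real.sq_sqrt hβ
  have : 0 ≤ √α * a * (√β * b) := by positivity
  refine (pow_le_pow_iff_left₀ hc (by positivity) two_ne_zero).mp ?_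
  nlinarith

namespace LinearPMap

variable {𝕜 H : Type*} [RCLike 𝕜] [NormedAddCommGroup H] [InnerProductSpace 𝕜 H]
  {A B C S T : H →ₗ.[𝕜] H}

theorem IsClosable.mem_graph_closure_iff (hT : T.IsClosable) {p : H × H} :
    p ∈ T.closure.graph ↔ p ∈ _root_.closure (T.graph : Set (H × H)) := by
  rw [← hT.graph_closure_eq_closure_graph, ← SetLike.mem_coe, Submodule.topologicalClosure_coe]

theorem IsClosable.closure_domain_subset (hT : T.IsClosable) :
    (T.closure.domain : Set H) ⊆ _root_.closure T.domain := fun x hx =>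
  map_mem_closure continuous_fst (hT.mem_graph_closure_iff.mp (T.closure.mem_graph ⟨x, hx⟩))
    fun _ hp => mem_domain_of_mem_graph hp

theorem mem_graph_add_iff {x y : H} :
    (x, y) ∈ (A + B).graph ↔
      ∃ ya yb, (x, ya) ∈ A.graph ∧ (x, yb) ∈ B.graph ∧ ya + yb = y := by
  constructor
  · rintro h
    obtain ⟨u, rfl, rfl⟩ := (A + B).mem_graph_iff.mp h
    exact ⟨_, _, A.mem_graph ⟨u, u.2.1⟩, B.mem_graph ⟨u, u.2.2⟩, (add_apply A B u).symm⟩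
  · rintro ⟨ya, yb, ha, hb, rfl⟩
    obtain ⟨u, rfl, rfl⟩ := A.mem_graph_iff.mp ha
    obtain ⟨v, hv : (v : H) = u, rfl⟩ := B.mem_graph_iff.mp hb
    refine (A + B).mem_graph_iff.mpr ⟨⟨u, u.2, hv ▸ v.2⟩, rfl, ?_⟩
    rw [add_apply]
    congr 2
    exact Subtype.ext hv.symm

theorem mem_graph_domRestrict_iff {D : Submodule 𝕜 H} {x c : H} :
    (x, c) ∈ (B.domRestrict D).graph ↔ x ∈ D ∧ (x, c) ∈ B.graph := by
  refine ⟨fun h => ⟨(mem_domain_of_mem_graph h).1, le_graph_of_le domRestrict_le h⟩,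
    fun ⟨hx, hc⟩ => ?_⟩
  obtain ⟨u, rfl, rfl⟩ := B.mem_graph_iff.mp hc
  exact (B.domRestrict D).mem_graph_iff.mpr ⟨⟨u, hx, u.2⟩, rfl, domRestrict_apply rfl⟩

theorem isSymmetricOp_iff_graph :
    T.IsSymmetricOp ↔ ∀ p ∈ T.graph, ∀ q ∈ T.graph, ⟪p.2, q.1⟫_𝕜 = ⟪p.1, q.2⟫_𝕜 := by
  refine ⟨fun h p hp q hq => ?_, fun h x y => h _ (T.mem_graph x) _ (T.mem_graph y)⟩
  obtain ⟨x, hx1, hx2⟩ := T.mem_graph_iff.mp hp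
  obtain ⟨y, hy1, hy2⟩ := T.mem_graph_iff.mp hq
  rw [← hx1, ← hx2, ← hy1, ← hy2]
  exact h x y

theorem IsSymmetricOp.inner_eq (hT : T.IsSymmetricOp) {x y x' y' : H}
    (h : (x, y) ∈ T.graph) (h' : (x', y') ∈ T.graph) : ⟪y, x'⟫_𝕜 = ⟪x, y'⟫_𝕜 :=
  isSymmetricOp_iff_graph.mp hT _ h _ h'

theorem IsSymmetricOp.add (hA : A.IsSymmetricOp) (hB : B.IsSymmetricOp) :
    (A + B).IsSymmetricOp := by
  intro x y
  rw [add_apply, add_apply, inner_add_left, inner_add_right,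
    hA ⟨x, x.2.1⟩ ⟨y, y.2.1⟩, hB ⟨x, x.2.2⟩ ⟨y, y.2.2⟩]

theorem IsSymmetricOp.domRestrict (hB : B.IsSymmetricOp) (D : Submodule 𝕜 H) :
    (B.domRestrict D).IsSymmetricOp :=
  fun x y => hB ⟨x, x.2.2⟩ ⟨y, y.2.2⟩

theorem IsSymmetricOp.closure (hT : T.IsSymmetricOp) (hcl : T.IsClosable) :
    T.closure.IsSymmetricOp := by
  rw [isSymmetricOp_iff_graph] at hT ⊢
  intro p hp q hq
  rw [hcl.mem_graph_closure_iff] at hp hq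
  exact Set.eqOn_closure₂ (by fun_prop) (by fun_prop) hT p hp q hq

def jointGraph (A B : H →ₗ.[𝕜] H) : Set (H × H × H) :=
  {p | (p.1, p.2.1) ∈ A.graph ∧ (p.1, p.2.2) ∈ B.graph}

/-- The relation `⟪A x, B y⟫ = ⟪B x, A y⟫` on `dom A ∩ dom B`, stated on graphs so that it passes
to closures. -/
def InnerCommute (A B : H →ₗ.[𝕜] H) : Prop :=
  ∀ p ∈ jointGraph A B, ∀ q ∈ jointGraph A B, ⟪p.2.1, q.2.2⟫_𝕜 = ⟪p.2.2, q.2.1⟫_𝕜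

theorem innerCommute_self : InnerCommute S S := by
  rintro p ⟨hp1, hp2⟩ q ⟨hq1, hq2⟩
  rw [S.mem_graph_snd_inj hp1 hp2 rfl, S.mem_graph_snd_inj hq1 hq2 rfl]

theorem innerCommute_of_inner_eq (hsub : A.domain ≤ B.domain)
    (hcomm : ∀ x y : A.domain,
      ⟪A x, B ⟨y.1, hsub y.2⟩⟫_𝕜 = ⟪B ⟨x.1, hsub x.2⟩, A y⟫_𝕜) : InnerCommute A B := by
  rintro ⟨x, y, c⟩ ⟨hy, hc⟩ ⟨x', y', c'⟩ ⟨hy', hc'⟩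
  obtain ⟨u, rfl, rfl⟩ := A.mem_graph_iff.mp hy
  obtain ⟨u', rfl, rfl⟩ := A.mem_graph_iff.mp hy'
  rw [B.mem_graph_snd_inj hc (B.mem_graph ⟨u, hsub u.2⟩) rfl,
    B.mem_graph_snd_inj hc' (B.mem_graph ⟨u', hsub u'.2⟩) rfl]
  exact hcomm u u'

theorem InnerCommute.of_subset_closure {A' B' : H →ₗ.[𝕜] H} (h : InnerCommute A B)
    (hsub : jointGraph A' B' ⊆ _root_.closure (jointGraph A B)) : InnerCommute A' B' :=
  fun p hp q hq => Set.eqOn_closure₂ (by fun_prop) (by fun_prop) h p (hsub hp) q (hsub hq)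

theorem mem_closure_graph_add {p : H × H × H} (hp : p ∈ _root_.closure (jointGraph A B)) :
    (p.1, p.2.1 + p.2.2) ∈ _root_.closure ((A + B).graph : Set (H × H)) :=
  map_mem_closure (f := fun p : H × H × H => (p.1, p.2.1 + p.2.2)) (by fun_prop) hp
    fun _ hq => mem_graph_add_iff.mpr ⟨_, _, hq.1, hq.2, rfl⟩

theorem mem_closure_graph_domRestrict {p : H × H × H} (hp : p ∈ _root_.closure (jointGraph A B)) :
    (p.1, p.2.2) ∈ _root_.closure ((B.domRestrict A.domain).graph : Set (H × H)) :=
  map_mem_closure (f := fun p : H × H × H => (p.1, p.2.2)) (by fun_prop) hp fun _ hq =>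
    mem_graph_domRestrict_iff.mpr ⟨mem_domain_of_mem_graph hq.1, hq.2⟩

theorem jointGraph_closure_subset (hB : (B.domRestrict A.domain).IsClosable)
    (hJ : ∀ {x y}, (x, y) ∈ A.closure.graph → ∃ c, (x, y, c) ∈ _root_.closure (jointGraph A B)) :
    jointGraph A.closure (B.domRestrict A.domain).closure ⊆ _root_.closure (jointGraph A B) := by
  rintro ⟨x, y, c⟩ ⟨hy : (x, y) ∈ _, hc : (x, c) ∈ _⟩
  obtain ⟨c₀, hc₀⟩ := hJ hy
  have hc₀' : (x, c₀) ∈ (B.domRestrict A.domain).closure.graph :=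
    hB.mem_graph_closure_iff.mpr (mem_closure_graph_domRestrict hc₀)
  rwa [(B.domRestrict A.domain).closure.mem_graph_snd_inj hc hc₀' rfl]

open WithLp in
/-- The graph of `t • S` in the Hilbert sum `H ⊕₂ H`, written as a preimage so that it is closed
when `S` is (a junk value at `t = 0`). -/
def scaledGraph (S : H →ₗ.[𝕜] H) (t : ℝ) : Submodule 𝕜 (WithLp 2 (H × H)) :=
  S.graph.comap ((fstL 2 𝕜 H H).prod ((t : 𝕜)⁻¹ • sndL 2 𝕜 H H) : WithLp 2 (H × H) →ₗ[𝕜] H × H)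

theorem mem_scaledGraph {t : ℝ} {p : WithLp 2 (H × H)} :
    p ∈ S.scaledGraph t ↔ (p.fst, (t : 𝕜)⁻¹ • p.snd) ∈ S.graph :=
  Iff.rfl

variable [CompleteSpace H]

theorem IsSymmetricOp.isClosable (hT : T.IsSymmetricOp) (hd : Dense (T.domain : Set H)) :
    T.IsClosable :=
  (adjoint_isClosed hd).isClosable.leIsClosable (IsFormalAdjoint.le_adjoint hd hT)

theorem IsSymmetricOp.isClosable_domRestrict (hB : B.IsSymmetricOp)
    (hd : Dense (A.domain : Set H)) (hsub : A.domain ≤ B.domain) :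
    (B.domRestrict A.domain).IsClosable :=
  (hB.domRestrict _).isClosable (by rwa [domRestrict_domain, inf_of_le_left hsub])

theorem IsSymmetricOp.mem_graph_closure_of_mem_graph_adjoint (hT : T.IsSymmetricOp)
    (hd : Dense (T.domain : Set H)) {R : H →L[𝕜] H} (hR : (R : H →ₗ[𝕜] H).IsSymmetric)
    (hRdom : ∀ f, R f ∈ T.closure.domain)
    (hRT : ∀ x y, (x, y) ∈ T.graph → (R x, R y) ∈ T.closure.graph) {u v : H}
    (huv : (u, v) ∈ T.closure.adjoint.graph) : (R u, R v) ∈ T.closure.graph := by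
  have hdc : Dense (T.closure.domain : Set H) := hd.mono (T.le_closure).1
  rw [adjoint_graph_eq_graph_adjoint hdc, Submodule.mem_adjoint_iff] at huv
  obtain ⟨y, hy⟩ := mem_domain_iff.mp (hRdom u)
  convert hy using 2
  refine (hd.eq_of_inner_right 𝕜 fun x hx => ?_).symm
  have hTx : ((x : H), T ⟨x, hx⟩) ∈ T.closure.graph :=
    le_graph_of_le T.le_closure (T.mem_graph ⟨x, hx⟩)
  calc ⟪x, y⟫_𝕜 = ⟪T ⟨x, hx⟩, R u⟫_𝕜 := ((hT.closure (hT.isClosable hd)).inner_eq hTx hy).symm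
    _ = ⟪R (T ⟨x, hx⟩), u⟫_𝕜 := (hR _ _).symm
    _ = ⟪R x, v⟫_𝕜 := sub_eq_zero.mp (huv _ _ (hRT _ _ (T.mem_graph ⟨x, hx⟩)))
    _ = ⟪x, R v⟫_𝕜 := hR _ _

theorem IsSymmetricOp.isEssSelfAdjointOp_of_tendsto {ι : Type*} {l : Filter ι}
    [l.NeBot] (hT : T.IsSymmetricOp) (hd : Dense (T.domain : Set H))
    (R : ι → H →L[𝕜] H) (hR : ∀ i, (R i : H →ₗ[𝕜] H).IsSymmetric)
    (hlim : ∀ f, Tendsto (fun i => R i f) l (𝓝 f))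
    (hRdom : ∀ᶠ i in l, ∀ f, R i f ∈ T.closure.domain)
    (hRT : ∀ᶠ i in l, ∀ x y, (x, y) ∈ T.graph → (R i x, R i y) ∈ T.closure.graph) :
    T.IsEssSelfAdjointOp := by
  have hcl := hT.isClosable hd
  have hdc : Dense (T.closure.domain : Set H) := hd.mono (T.le_closure).1
  refine ⟨hcl, hdc, le_antisymm (le_of_le_graph fun p hp => ?_)
    (IsFormalAdjoint.le_adjoint hdc (hT.closure hcl))⟩
  exact hcl.closure_isClosed.mem_of_tendsto ((hlim p.1).prodMk_nhds (hlim p.2))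
    ((hRdom.and hRT).mono fun i hi =>
      hT.mem_graph_closure_of_mem_graph_adjoint hd (hR i) hi.1 hi.2 hp)

theorem IsSelfAdjointOp.mem_graph_iff (hS : S.IsSelfAdjointOp) {u v : H} :
    (u, v) ∈ S.graph ↔ ∀ x y, (x, y) ∈ S.graph → ⟪y, u⟫_𝕜 = ⟪x, v⟫_𝕜 := by
  conv_lhs => rw [← hS.2, adjoint_graph_eq_graph_adjoint hS.1, Submodule.mem_adjoint_iff]
  simp only [sub_eq_zero]

theorem IsSelfAdjointOp.isSymmetricOp (hS : S.IsSelfAdjointOp) : S.IsSymmetricOp :=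
  isSymmetricOp_iff_graph.mpr fun p hp _ hq => hS.mem_graph_iff.mp hq p.1 p.2 hp

theorem IsSelfAdjointOp.isClosed (hS : S.IsSelfAdjointOp) : S.IsClosed :=
  hS.2 ▸ adjoint_isClosed hS.1

theorem IsEssSelfAdjointOp.isSelfAdjointOp_closure (hA : A.IsEssSelfAdjointOp) :
    A.closure.IsSelfAdjointOp :=
  hA.2

theorem IsEssSelfAdjointOp.dense_domain (hA : A.IsEssSelfAdjointOp) : Dense (A.domain : Set H) :=
  dense_closure.mp (hA.2.1.mono hA.1.closure_domain_subset)

theorem IsSelfAdjointOp.hasOrthogonalProjection (hS : S.IsSelfAdjointOp) (t : ℝ) :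
    (S.scaledGraph t).HasOrthogonalProjection := by
  have : _root_.IsClosed (S.scaledGraph t : Set (WithLp 2 (H × H))) :=
    hS.isClosed.preimage (ContinuousLinearMap.continuous _)
  have := this.completeSpace_coe
  infer_instance

open WithLp in
/-- `(1 + t² S²)⁻¹`, as the first component of the orthogonal projection of `(f, 0)` onto the
graph of `t • S` (see `exists_sqResolvent_add_sq_smul_eq`). -/
noncomputable def IsSelfAdjointOp.sqResolvent (hS : S.IsSelfAdjointOp) (t : ℝ) :
    H →L[𝕜] H :=
  haveI := hS.hasOrthogonalProjection t
  fstL 2 𝕜 H H ∘L (S.scaledGraph t).starProjection ∘L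
    (prodContinuousLinearEquiv 2 𝕜 H H).symm.toContinuousLinearMap ∘L
    ContinuousLinearMap.inl 𝕜 H H

theorem IsSelfAdjointOp.sqResolvent_apply (hS : S.IsSelfAdjointOp) (t : ℝ)
    [(S.scaledGraph t).HasOrthogonalProjection] (f : H) :
    hS.sqResolvent t f = ((S.scaledGraph t).starProjection (WithLp.toLp 2 (f, 0))).fst :=
  rfl

theorem IsSelfAdjointOp.sqResolvent_spec (hS : S.IsSelfAdjointOp) (t : ℝ) (f : H) :
    ∃ p ∈ S.scaledGraph t, WithLp.toLp 2 (f, 0) - p ∈ (S.scaledGraph t)ᗮ ∧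
      ‖p‖ ≤ ‖f‖ ∧ hS.sqResolvent t f = p.fst := by
  have := hS.hasOrthogonalProjection t
  refine ⟨_, Submodule.starProjection_apply_mem _ (WithLp.toLp 2 (f, 0)),
    Submodule.sub_starProjection_mem_orthogonal _, ?_, hS.sqResolvent_apply t f⟩
  simpa using Submodule.norm_starProjection_apply_le (S.scaledGraph t) (WithLp.toLp 2 (f, 0))

theorem IsSelfAdjointOp.isSymmetric_sqResolvent (hS : S.IsSelfAdjointOp) (t : ℝ) :
    (hS.sqResolvent t : H →ₗ[𝕜] H).IsSymmetric := by
  have := hS.hasOrthogonalProjection t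
  intro f g
  simpa [sqResolvent_apply] using (S.scaledGraph t).inner_starProjection_left_eq_right
    (WithLp.toLp 2 (f, (0 : H))) (WithLp.toLp 2 (g, (0 : H)))

theorem IsSelfAdjointOp.norm_sqResolvent_le (hS : S.IsSelfAdjointOp) (t : ℝ) (f : H) :
    ‖hS.sqResolvent t f‖ ≤ ‖f‖ := by
  obtain ⟨p, -, -, hp, hRf⟩ := hS.sqResolvent_spec t f
  exact hRf ▸ (WithLp.norm_fst_le H p).trans hp

theorem IsSelfAdjointOp.norm_smul_le_of_mem_graph (hS : S.IsSelfAdjointOp)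
    {t : ℝ} (ht : t ≠ 0) {f z : H} (hz : (hS.sqResolvent t f, z) ∈ S.graph) :
    ‖(t : 𝕜) • z‖ ≤ ‖f‖ := by
  obtain ⟨p, hpK, -, hp, hRf⟩ := hS.sqResolvent_spec t f
  rw [S.mem_graph_snd_inj hz (mem_scaledGraph.mp hpK) hRf, smul_smul,
    mul_inv_cancel₀ (RCLike.ofReal_ne_zero.mpr ht), one_smul]
  exact (WithLp.norm_snd_le H p).trans hp

theorem IsSelfAdjointOp.exists_sqResolvent_add_sq_smul_eq (hS : S.IsSelfAdjointOp)
    {t : ℝ} (ht : t ≠ 0) (f : H) :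
    ∃ z w, (hS.sqResolvent t f, z) ∈ S.graph ∧ (z, w) ∈ S.graph ∧
      hS.sqResolvent t f + (t : 𝕜) ^ 2 • w = f := by
  obtain ⟨p, hpK, hq, -, hRf⟩ := hS.sqResolvent_spec t f
  have ht' : (t : 𝕜) ≠ 0 := RCLike.ofReal_ne_zero.mpr ht
  -- orthogonality of `(f, 0) - p` to the graph of `t • S` says `(t • p.snd, f - p.fst) ∈ graph S*`
  have hz : ((t : 𝕜) • p.snd, f - p.fst) ∈ S.graph := by
    rw [hS.mem_graph_iff]
    intro a b hab
    have hmem : WithLp.toLp 2 (a, (t : 𝕜) • b) ∈ S.scaledGraph t := by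
      rw [mem_scaledGraph]
      simpa [smul_smul, ht'] using hab
    have := Submodule.inner_right_of_mem_orthogonal hmem hq
    simp only [WithLp.prod_inner_apply, WithLp.ofLp_fst, WithLp.ofLp_snd, inner_sub_right,
      inner_smul_left, RCLike.conj_ofReal, inner_zero_right] at this
    rw [inner_smul_right, inner_sub_right]
    linear_combination -this
  refine ⟨(t : 𝕜)⁻¹ • p.snd, ((t : 𝕜) ^ 2)⁻¹ • (f - p.fst), hRf ▸ hpK, ?_, ?_⟩
  · have hinv : ((t : 𝕜) ^ 2)⁻¹ * t = (t : 𝕜)⁻¹ := by field_simp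
    convert S.graph.smul_mem ((t : 𝕜) ^ 2)⁻¹ hz using 1
    rw [Prod.smul_mk, smul_smul, hinv]
  · rw [hRf, smul_smul, mul_inv_cancel₀ (pow_ne_zero 2 ht'), one_smul, add_sub_cancel]

theorem IsSelfAdjointOp.sqResolvent_mem_graph (hS : S.IsSelfAdjointOp)
    (hC : C.IsSymmetricOp) (hdom : S.domain ≤ C.domain) (hSC : InnerCommute S C) {t : ℝ}
    (ht : t ≠ 0) {x c : H} (hxc : (x, c) ∈ C.graph) :
    (hS.sqResolvent t x, hS.sqResolvent t c) ∈ C.graph := by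
  have hCdom : ∀ {y z}, (y, z) ∈ S.graph → ∃ c, (y, c) ∈ C.graph :=
    fun h => mem_domain_iff.mp (hdom (mem_domain_of_mem_graph h))
  obtain ⟨zx, wx, h1x, h2x, hx'⟩ := hS.exists_sqResolvent_add_sq_smul_eq ht x
  obtain ⟨ct, hct⟩ := hCdom h1x
  convert hct using 2
  refine ext_inner_left 𝕜 fun f => ?_
  obtain ⟨zf, wf, h1f, h2f, hf⟩ := hS.exists_sqResolvent_add_sq_smul_eq ht f
  obtain ⟨cyf, hcyf⟩ := hCdom h1f
  obtain ⟨czf, hczf⟩ := hCdom h2f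
  obtain ⟨czx, hczx⟩ := hCdom h2x
  set R := hS.sqResolvent t
  -- the commutation relation, used twice, moves `S²` from `R x` onto `R f`
  have hw : ⟪cyf, wx⟫_𝕜 = ⟪wf, ct⟫_𝕜 :=
    calc ⟪cyf, wx⟫_𝕜 = ⟪zf, czx⟫_𝕜 :=
          (hSC (R f, zf, cyf) ⟨h1f, hcyf⟩ (zx, wx, czx) ⟨h2x, hczx⟩).symm
      _ = ⟪czf, zx⟫_𝕜 := (hC.inner_eq hczf hczx).symm
      _ = ⟪wf, ct⟫_𝕜 := (hSC (zf, wf, czf) ⟨h2f, hczf⟩ (R x, zx, ct) ⟨h1x, hct⟩).symm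
  calc ⟪f, R c⟫_𝕜 = ⟪R f, c⟫_𝕜 := (hS.isSymmetric_sqResolvent t _ _).symm
    _ = ⟪cyf, x⟫_𝕜 := (hC.inner_eq hcyf hxc).symm
    _ = ⟪cyf, R x⟫_𝕜 + (t : 𝕜) ^ 2 * ⟪cyf, wx⟫_𝕜 := by
      conv_lhs => rw [← hx']
      rw [inner_add_right, inner_smul_right]
    _ = ⟪R f, ct⟫_𝕜 + (t : 𝕜) ^ 2 * ⟪wf, ct⟫_𝕜 := by rw [hC.inner_eq hcyf hct, hw]
    _ = ⟪f, ct⟫_𝕜 := by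
      conv_rhs => rw [← hf]
      simp [inner_add_left, inner_smul_left]

theorem IsSelfAdjointOp.norm_sqResolvent_sub_le (hS : S.IsSelfAdjointOp)
    {t : ℝ} (ht : t ≠ 0) {x y : H} (hxy : (x, y) ∈ S.graph) :
    ‖hS.sqResolvent t x - x‖ ≤ |t| * ‖y‖ := by
  obtain ⟨z, w, h1, h2, hx⟩ := hS.exists_sqResolvent_add_sq_smul_eq ht x
  have hz : z = hS.sqResolvent t y := S.mem_graph_snd_inj h1
    (hS.sqResolvent_mem_graph hS.isSymmetricOp le_rfl innerCommute_self ht hxy) rfl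
  calc ‖hS.sqResolvent t x - x‖ = ‖(t : 𝕜) ^ 2 • w‖ := by
        rw [norm_sub_rev, eq_sub_of_add_eq' hx]
    _ = |t| * ‖(t : 𝕜) • w‖ := by rw [sq, ← smul_smul, norm_smul, RCLike.norm_ofReal]
    _ ≤ |t| * ‖y‖ := by
      gcongr
      exact hS.norm_smul_le_of_mem_graph ht (hz ▸ h2)

theorem IsSelfAdjointOp.tendsto_sqResolvent (hS : S.IsSelfAdjointOp) (f : H) :
    Tendsto (fun t => hS.sqResolvent t f) (𝓝[≠] 0) (𝓝 f) := by
  have hbdd : ∃ C, ∀ (t : ℝ) (f : H), ‖hS.sqResolvent t f‖ ≤ C * ‖f‖ :=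
    ⟨1, fun t f => by simpa using hS.norm_sqResolvent_le t f⟩
  have hequi := ((NormedSpace.equicontinuous_TFAE fun t => hS.sqResolvent t).out 3 1).mp hbdd
  have hclosed := hequi.isClosed_setOfPred_tendsto (l := 𝓝[≠] 0) continuous_id
  -- by equicontinuity it suffices to converge on the dense `dom S`, where `‖Rₜ x - x‖ ≤ |t| ‖S x‖`
  refine hclosed.closure_subset_iff.mpr (fun x hx => ?_) (hS.1 f)
  rw [Set.mem_ofPred_eq, tendsto_iff_norm_sub_tendsto_zero]
  refine squeeze_zero' (Eventually.of_forall fun _ => norm_nonneg _)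
    (eventually_nhdsWithin_of_forall fun t ht =>
      hS.norm_sqResolvent_sub_le ht (S.mem_graph ⟨x, hx⟩)) ?_
  exact ((continuous_abs.mul continuous_const).tendsto' 0 0 (by simp)).mono_left nhdsWithin_le_nhds

theorem IsSelfAdjointOp.isEssSelfAdjointOp_of_sqResolvent (hS : S.IsSelfAdjointOp)
    (hT : T.IsSymmetricOp) (hd : Dense (T.domain : Set H))
    (hdom : ∀ x ∈ S.domain, ∃ y, (x, y) ∈ _root_.closure (T.graph : Set (H × H)))
    (hRT : ∀ t ≠ 0, ∀ x y, (x, y) ∈ T.graph →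
      (hS.sqResolvent t x, hS.sqResolvent t y) ∈ _root_.closure (T.graph : Set (H × H))) :
    T.IsEssSelfAdjointOp := by
  have hcl := hT.isClosable hd
  refine hT.isEssSelfAdjointOp_of_tendsto hd hS.sqResolvent hS.isSymmetric_sqResolvent
    hS.tendsto_sqResolvent ?_ ?_ <;> filter_upwards [self_mem_nhdsWithin] with t ht
  · intro f
    obtain ⟨z, -, hz, -⟩ := hS.exists_sqResolvent_add_sq_smul_eq ht f
    obtain ⟨y, hy⟩ := hdom _ (mem_domain_of_mem_graph hz)
    exact mem_domain_iff.mpr ⟨y, hcl.mem_graph_closure_iff.mpr hy⟩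
  · intro x y hxy
    exact hcl.mem_graph_closure_iff.mpr (hRT t ht x y hxy)

theorem exists_mem_closure_jointGraph (hA : A.IsClosable)
    (hsub : A.domain ≤ B.domain) {a b : ℝ}
    (hbound : ∀ x : A.domain, ‖B ⟨x, hsub x.2⟩‖ ≤ a * ‖A x‖ + b * ‖(x : H)‖) {x y : H}
    (hxy : (x, y) ∈ A.closure.graph) : ∃ c, (x, y, c) ∈ _root_.closure (jointGraph A B) := by
  obtain ⟨q, hqA, hq⟩ := mem_closure_iff_seq_limit.mp (hA.mem_graph_closure_iff.mp hxy)
  choose u hu1 hu2 using fun n => A.mem_graph_iff.mp (hqA n)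
  have hB : CauchySeq fun n => B ⟨u n, hsub (u n).2⟩ := by
    refine hq.snd_nhds.cauchySeq.of_dist_le_add hq.fst_nhds.cauchySeq a b fun m n => ?_
    simp only [dist_eq_norm, ← hu1, ← hu2, ← map_sub]
    exact hbound (u m - u n)
  obtain ⟨c, hc⟩ := cauchySeq_tendsto_of_complete hB
  refine ⟨c, mem_closure_of_tendsto (hq.fst_nhds.prodMk_nhds (hq.snd_nhds.prodMk_nhds hc))
    (Eventually.of_forall fun n => ⟨hqA n, ?_⟩)⟩
  rw [← hu1]
  exact B.mem_graph ⟨u n, hsub (u n).2⟩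

theorem IsEssSelfAdjointOp.sqResolvent_mem_closure_jointGraph (hA : A.IsEssSelfAdjointOp)
    (hBs : B.IsSymmetricOp) (hsub : A.domain ≤ B.domain) {a b : ℝ}
    (hbound : ∀ x : A.domain, ‖B ⟨x, hsub x.2⟩‖ ≤ a * ‖A x‖ + b * ‖(x : H)‖)
    (hAB : InnerCommute A B) {t : ℝ} (ht : t ≠ 0) {p : H × H × H} (hp : p ∈ jointGraph A B) :
    (hA.isSelfAdjointOp_closure.sqResolvent t p.1, hA.isSelfAdjointOp_closure.sqResolvent t p.2.1,
      hA.isSelfAdjointOp_closure.sqResolvent t p.2.2) ∈ _root_.closure (jointGraph A B) := by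
  have hS := hA.isSelfAdjointOp_closure
  have hJ {x y : H} (hxy : (x, y) ∈ A.closure.graph) :=
    exists_mem_closure_jointGraph hA.1 hsub hbound hxy
  have hB := hBs.isClosable_domRestrict hA.dense_domain hsub
  have hJC := jointGraph_closure_subset hB hJ
  have hdom : A.closure.domain ≤ (B.domRestrict A.domain).closure.domain := fun x hx => by
    obtain ⟨c, hc⟩ := hJ (A.closure.mem_graph ⟨x, hx⟩)
    exact mem_domain_iff.mpr ⟨c, hB.mem_graph_closure_iff.mpr (mem_closure_graph_domRestrict hc)⟩
  have hpB : (p.1, p.2.2) ∈ (B.domRestrict A.domain).closure.graph :=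
    le_graph_of_le (le_closure _)
      (mem_graph_domRestrict_iff.mpr ⟨mem_domain_of_mem_graph hp.1, hp.2⟩)
  exact hJC ⟨hS.sqResolvent_mem_graph hS.isSymmetricOp le_rfl innerCommute_self ht
    (le_graph_of_le A.le_closure hp.1), hS.sqResolvent_mem_graph ((hBs.domRestrict _).closure hB)
    hdom (hAB.of_subset_closure hJC) ht hpB⟩

theorem IsEssSelfAdjointOp.add (hA : A.IsEssSelfAdjointOp)
    (hAs : A.IsSymmetricOp) (hBs : B.IsSymmetricOp) (hsub : A.domain ≤ B.domain) {a b : ℝ}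
    (hbound : ∀ x : A.domain, ‖B ⟨x, hsub x.2⟩‖ ≤ a * ‖A x‖ + b * ‖(x : H)‖)
    (hAB : InnerCommute A B) : (A + B).IsEssSelfAdjointOp := by
  refine hA.isSelfAdjointOp_closure.isEssSelfAdjointOp_of_sqResolvent (hAs.add hBs)
    (by rw [add_domain, inf_of_le_left hsub]; exact hA.dense_domain) (fun x hx => ?_) ?_
  · obtain ⟨c, hc⟩ := exists_mem_closure_jointGraph hA.1 hsub hbound (A.closure.mem_graph ⟨x, hx⟩)
    exact ⟨_, mem_closure_graph_add hc⟩
  · rintro t ht x y hxy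
    obtain ⟨ya, yb, ha, hb, rfl⟩ := mem_graph_add_iff.mp hxy
    rw [_root_.map_add]
    exact mem_closure_graph_add
      (hA.sqResolvent_mem_closure_jointGraph hBs hsub hbound hAB ht (p := (x, ya, yb)) ⟨ha, hb⟩)

theorem IsEssSelfAdjointOp.domRestrict (hA : A.IsEssSelfAdjointOp)
    (hBs : B.IsSymmetricOp) (hsub : A.domain ≤ B.domain) {a b : ℝ}
    (hbound : ∀ x : A.domain, ‖B ⟨x, hsub x.2⟩‖ ≤ a * ‖A x‖ + b * ‖(x : H)‖)
    (hAB : InnerCommute A B) : (B.domRestrict A.domain).IsEssSelfAdjointOp := by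
  refine hA.isSelfAdjointOp_closure.isEssSelfAdjointOp_of_sqResolvent (hBs.domRestrict _)
    (by rw [domRestrict_domain, inf_of_le_left hsub]; exact hA.dense_domain) (fun x hx => ?_) ?_
  · obtain ⟨c, hc⟩ := exists_mem_closure_jointGraph hA.1 hsub hbound (A.closure.mem_graph ⟨x, hx⟩)
    exact ⟨_, mem_closure_graph_domRestrict hc⟩
  · rintro t ht x c hxc
    obtain ⟨hx, hc⟩ := mem_graph_domRestrict_iff.mp hxc
    exact mem_closure_graph_domRestrict (hA.sqResolvent_mem_closure_jointGraph hBs hsub hbound hAB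
      ht (p := (x, A ⟨x, hx⟩, c)) ⟨A.mem_graph ⟨x, hx⟩, hc⟩)

end LinearPMap

/-- **Theorem.** Let `A, B` be symmetric operators in a Hilbert space `H` such that `A` is
essentially selfadjoint, `B` is `A`-bounded, and `⟪A x, B y⟫ = ⟪B x, A y⟫` for all
`x, y ∈ dom A`. Then `A + B` (with domain `dom A`) and the restriction of `B` to `dom A`
are both essentially selfadjoint. -/
theorem essentially_selfadjoint_of_comm' {𝕜 H : Type*} [RCLike 𝕜]
    [NormedAddCommGroup H] [InnerProductSpace 𝕜 H] [CompleteSpace H]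
    (A B : H →ₗ.[𝕜] H) (hA : A.IsEssSelfAdjointOp)
    (hAsymm : A.IsSymmetricOp) (hBsymm : B.IsSymmetricOp)
    (hsub : A.domain ≤ B.domain)
    (hbdd : ∃ α β : ℝ, 0 ≤ α ∧ 0 ≤ β ∧ ∀ x : A.domain,
      ‖B ⟨x.1, hsub x.2⟩‖ ^ 2 ≤ α * ‖A x‖ ^ 2 + β * ‖(x : H)‖ ^ 2)
    (hcomm : ∀ x y : A.domain,
      inner (𝕜 := 𝕜) (A x) (B ⟨y.1, hsub y.2⟩) =
        inner (𝕜 := 𝕜) (B ⟨x.1, hsub x.2⟩) (A y)) :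
    (A + B).IsEssSelfAdjointOp ∧ (B.domRestrict A.domain).IsEssSelfAdjointOp := by
  obtain ⟨α, β, hα, hβ, hbdd⟩ := hbdd
  have hbound : ∀ x : A.domain, ‖B ⟨x, hsub x.2⟩‖ ≤ √α * ‖A x‖ + √β * ‖(x : H)‖ := fun x =>
    Real.le_sqrt_mul_add_sqrt_mul (norm_nonneg _) (norm_nonneg _) (norm_nonneg _) hα hβ (hbdd x)
  have hAB := innerCommute_of_inner_eq hsub hcomm
  exact ⟨hA.add hAsymm hBsymm hsub hbound hAB, hA.domRestrict hBsymm hsub hbound hAB⟩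
end

section
/- Let A be a symmetric linear operator in a real or complex Hilbert space H and let n be a positive integer. Then Aⁿ is Aⁿ⁺¹-bounded: there exist constants α, β ≥ 0 such that ‖Aⁿ x‖² ≤ α‖Aⁿ⁺¹ x‖² + β‖x‖² for all x ∈ dom(Aⁿ⁺¹). -/
/-!
For `x ∈ dom Aⁿ⁺¹` put `d k = ‖Aᵏ x‖²`. Symmetry gives
`‖Aᵏ⁺¹ x‖² = re ⟪Aᵏ x, Aᵏ⁺² x⟫ ≤ ‖Aᵏ x‖ ‖Aᵏ⁺² x‖`, so by AM-GM the sequence `d` is convex on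
`{0, …, n + 1}`. A convex sequence is bounded by the larger of its two endpoint values, hence
`d n ≤ d 0 + d (n + 1)`, i.e. `α = β = 1` work.
-/

open LinearPMap

/-- The product (composition) `A ∘ B` of two partially defined linear operators,
with domain `{x ∈ dom B : B x ∈ dom A}`, defined via its graph. -/
noncomputable def LinearPMap.pcomp {R E F G : Type*} [Ring R] [AddCommGroup E] [Module R E]
    [AddCommGroup F] [Module R F] [AddCommGroup G] [Module R G]
    (A : F →ₗ.[R] G) (B : E →ₗ.[R] F) : E →ₗ.[R] G :=
  Submodule.toLinearPMap
    { carrier := {p : E × G | ∃ y : F, (p.1, y) ∈ B.graph ∧ (y, p.2) ∈ A.graph}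
      add_mem' := fun ⟨y, hy1, hy2⟩ ⟨z, hz1, hz2⟩ =>
        ⟨y + z, B.graph.add_mem hy1 hz1, A.graph.add_mem hy2 hz2⟩
      zero_mem' := ⟨0, B.graph.zero_mem, A.graph.zero_mem⟩
      smul_mem' := fun c _ ⟨y, hy1, hy2⟩ =>
        ⟨c • y, B.graph.smul_mem c hy1, A.graph.smul_mem c hy2⟩ }

/-- The `n`-th power of a partially defined linear operator, with its natural domain:
`A⁰ = I` on all of `E` and `dom Aⁿ⁺¹ = {x ∈ dom Aⁿ : Aⁿ x ∈ dom A}`. -/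
noncomputable def LinearPMap.ppow {R E : Type*} [Ring R] [AddCommGroup E] [Module R E]
    (A : E →ₗ.[R] E) : ℕ → E →ₗ.[R] E
  | 0 => (LinearMap.id : E →ₗ[R] E).toPMap ⊤
  | n + 1 => A.pcomp (A.ppow n)

namespace LinearPMap

section Composition

variable {R E F G : Type*} [Ring R] [AddCommGroup E] [Module R E]
    [AddCommGroup F] [Module R F] [AddCommGroup G] [Module R G]
    {A : F →ₗ.[R] G} {B : E →ₗ.[R] F}

theorem mem_graph_pcomp_iff {x : E} {z : G} :
    (x, z) ∈ (A.pcomp B).graph ↔ ∃ y, (x, y) ∈ B.graph ∧ (y, z) ∈ A.graph := by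
  rw [pcomp, Submodule.toLinearPMap_graph_eq]
  · exact Iff.rfl
  · rintro ⟨_, z⟩ ⟨y, hxy, hyz⟩ (rfl : _ = 0)
    exact A.graph_fst_eq_zero_snd hyz (B.graph_fst_eq_zero_snd hxy rfl)

theorem mem_domain_pcomp_iff {x : E} :
    x ∈ (A.pcomp B).domain ↔ ∃ hx : x ∈ B.domain, B ⟨x, hx⟩ ∈ A.domain := by
  constructor
  · intro hx
    obtain ⟨z, hxz⟩ := mem_domain_iff.1 hx
    obtain ⟨y, hxy, hyz⟩ := mem_graph_pcomp_iff.1 hxz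
    have hxB := mem_domain_of_mem_graph hxy
    exact ⟨hxB, (image_iff hxB).2 hxy ▸ mem_domain_of_mem_graph hyz⟩
  · rintro ⟨hxB, hBx⟩
    exact mem_domain_iff.2
      ⟨_, mem_graph_pcomp_iff.2 ⟨_, mem_graph B ⟨x, hxB⟩, mem_graph A ⟨_, hBx⟩⟩⟩

theorem domain_pcomp_le : (A.pcomp B).domain ≤ B.domain :=
  fun _ hx => (mem_domain_pcomp_iff.1 hx).1

theorem pcomp_apply {x : E} (hx : x ∈ (A.pcomp B).domain) :
    A.pcomp B ⟨x, hx⟩ = A ⟨B ⟨x, domain_pcomp_le hx⟩, (mem_domain_pcomp_iff.1 hx).2⟩ :=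
  (A.pcomp B).mem_graph_snd_inj (mem_graph _ ⟨x, hx⟩)
    (mem_graph_pcomp_iff.2 ⟨_, mem_graph B ⟨x, _⟩, mem_graph A ⟨_, _⟩⟩) rfl

end Composition

variable {R E : Type*} [Ring R] [AddCommGroup E] [Module R E] (A : E →ₗ.[R] E)

theorem ppow_domain_antitone : Antitone fun n => (A.ppow n).domain :=
  antitone_nat_of_succ_le fun _ => domain_pcomp_le

theorem ppow_zero_apply (x : (A.ppow 0).domain) : A.ppow 0 x = x :=
  rfl

theorem ppow_succ_apply {n : ℕ} {x : E} (hx : x ∈ (A.ppow (n + 1)).domain) :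
    A.ppow (n + 1) ⟨x, hx⟩ =
      A ⟨A.ppow n ⟨x, domain_pcomp_le hx⟩, (mem_domain_pcomp_iff.1 hx).2⟩ :=
  pcomp_apply hx

end LinearPMap

theorem sub_le_mul_sub_of_two_mul_le_add {R : Type*} [CommRing R] [LinearOrder R]
    [IsStrictOrderedRing R] {d : ℕ → R} {n : ℕ} (hd : ∀ k < n, 2 * d (k + 1) ≤ d k + d (k + 2)) :
    d n - d 0 ≤ n * (d (n + 1) - d n) := by
  induction n with
  | zero => simp
  | succ n ih =>
    have hn := hd n n.lt_succ_self
    have ih := ih fun k hk => hd k (Nat.lt_succ_of_lt hk)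
    push_cast
    nlinarith [(n.cast_nonneg : (0 : R) ≤ n)]

theorem le_max_of_two_mul_le_add {R : Type*} [CommRing R] [LinearOrder R]
    [IsStrictOrderedRing R] {d : ℕ → R} {n : ℕ} (hd : ∀ k < n, 2 * d (k + 1) ≤ d k + d (k + 2)) :
    d n ≤ max (d 0) (d (n + 1)) := by
  have h := sub_le_mul_sub_of_two_mul_le_add hd
  rcases le_total (d n) (d (n + 1)) with hle | hle
  · exact le_max_of_le_right hle
  · exact le_max_of_le_left (by nlinarith [(n.cast_nonneg : (0 : R) ≤ n)])

namespace LinearPMap.IsSymmetricOp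

variable {𝕜 H : Type*} [RCLike 𝕜] [NormedAddCommGroup H] [InnerProductSpace 𝕜 H]
    {A : H →ₗ.[𝕜] H}

theorem sq_norm_apply_le (hA : A.IsSymmetricOp) (u : A.domain) (hu : A u ∈ A.domain) :
    ‖A u‖ ^ 2 ≤ ‖(u : H)‖ * ‖A ⟨A u, hu⟩‖ :=
  calc ‖A u‖ ^ 2 = RCLike.re (inner 𝕜 (A u) (A u)) := (inner_self_eq_norm_sq _).symm
    _ = RCLike.re (inner 𝕜 (u : H) (A ⟨A u, hu⟩)) := by rw [hA u ⟨A u, hu⟩]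
    _ ≤ ‖(u : H)‖ * ‖A ⟨A u, hu⟩‖ := re_inner_le_norm _ _

theorem two_mul_sq_norm_apply_le (hA : A.IsSymmetricOp) (u : A.domain) (hu : A u ∈ A.domain) :
    2 * ‖A u‖ ^ 2 ≤ ‖(u : H)‖ ^ 2 + ‖A ⟨A u, hu⟩‖ ^ 2 := by
  nlinarith [hA.sq_norm_apply_le u hu, two_mul_le_add_sq ‖(u : H)‖ ‖A ⟨A u, hu⟩‖]

theorem two_mul_sq_norm_ppow_succ_le (hA : A.IsSymmetricOp) {m : ℕ} {x : H}
    (hx : x ∈ (A.ppow (m + 2)).domain) :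
    2 * ‖A.ppow (m + 1) ⟨x, A.ppow_domain_antitone (by omega) hx⟩‖ ^ 2 ≤
      ‖A.ppow m ⟨x, A.ppow_domain_antitone (by omega) hx⟩‖ ^ 2 + ‖A.ppow (m + 2) ⟨x, hx⟩‖ ^ 2 := by
  have hx₁ := domain_pcomp_le hx
  set u : A.domain := ⟨A.ppow m ⟨x, domain_pcomp_le hx₁⟩, (mem_domain_pcomp_iff.1 hx₁).2⟩
  have hAu : A.ppow (m + 1) ⟨x, hx₁⟩ = A u := A.ppow_succ_apply hx₁
  have hu : A u ∈ A.domain := hAu ▸ (mem_domain_pcomp_iff.1 hx).2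
  have hAAu : A.ppow (m + 2) ⟨x, hx⟩ = A ⟨A u, hu⟩ := by
    rw [A.ppow_succ_apply hx]
    exact congrArg A (Subtype.ext hAu)
  rw [hAAu, hAu]
  exact hA.two_mul_sq_norm_apply_le u hu

end LinearPMap.IsSymmetricOp

theorem pow_bounded_by_pow_succ_general {𝕜 H : Type*} [RCLike 𝕜]
    [NormedAddCommGroup H] [InnerProductSpace 𝕜 H]
    (A : H →ₗ.[𝕜] H) (hsymm : A.IsSymmetricOp) (n : ℕ) :
    ∃ hsub : (A.ppow (n + 1)).domain ≤ (A.ppow n).domain,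
      ∃ α β : ℝ, 0 ≤ α ∧ 0 ≤ β ∧ ∀ x : (A.ppow (n + 1)).domain,
        ‖(A.ppow n) ⟨x.1, hsub x.2⟩‖ ^ 2 ≤
          α * ‖(A.ppow (n + 1)) x‖ ^ 2 + β * ‖(x : H)‖ ^ 2 := by
  classical
  refine ⟨A.ppow_domain_antitone n.le_succ, 1, 1, zero_le_one, zero_le_one, fun x => ?_⟩
  let d : ℕ → ℝ := fun k => if hk : (x : H) ∈ (A.ppow k).domain then ‖A.ppow k ⟨x, hk⟩‖ ^ 2 else 0
  have hd : ∀ k (hk : k ≤ n + 1), d k = ‖A.ppow k ⟨x, A.ppow_domain_antitone hk x.2⟩‖ ^ 2 :=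
    fun k hk => dif_pos _
  have hconvex : ∀ k < n, 2 * d (k + 1) ≤ d k + d (k + 2) := by
    intro k hk
    rw [hd k (by omega), hd (k + 1) (by omega), hd (k + 2) (by omega)]
    exact hsymm.two_mul_sq_norm_ppow_succ_le (A.ppow_domain_antitone (by omega) x.2)
  have hmax := le_max_of_two_mul_le_add hconvex
  rw [hd n n.le_succ, hd 0 (by omega), hd (n + 1) le_rfl, ppow_zero_apply] at hmax
  linarith [max_le_add_of_nonneg (sq_nonneg ‖(x : H)‖) (sq_nonneg ‖A.ppow (n + 1) x‖)]

/-- **Lemma.** Let `A` be a symmetric operator in a Hilbert space `H` and `n ≥ 1`. Then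
`Aⁿ` is `Aⁿ⁺¹`-bounded: `dom Aⁿ⁺¹ ⊆ dom Aⁿ` and there are `α, β ≥ 0` with
`‖Aⁿ x‖² ≤ α‖Aⁿ⁺¹ x‖² + β‖x‖²` for all `x ∈ dom Aⁿ⁺¹`. -/
theorem pow_bounded_by_pow_succ {𝕜 H : Type*} [RCLike 𝕜]
    [NormedAddCommGroup H] [InnerProductSpace 𝕜 H]
    (A : H →ₗ.[𝕜] H) (hsymm : A.IsSymmetricOp) (n : ℕ) (hn : 1 ≤ n) :
    ∃ hsub : (A.ppow (n + 1)).domain ≤ (A.ppow n).domain,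
      ∃ α β : ℝ, 0 ≤ α ∧ 0 ≤ β ∧ ∀ x : (A.ppow (n + 1)).domain,
        ‖(A.ppow n) ⟨x.1, hsub x.2⟩‖ ^ 2 ≤
          α * ‖(A.ppow (n + 1)) x‖ ^ 2 + β * ‖(x : H)‖ ^ 2 :=
  pow_bounded_by_pow_succ_general A hsymm n
end
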